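/- Let K ≥ 2, δ ∈ (0,1), σ > 0, d ≥ 1, and let w_k, w_l > 0 with w_k + (K−1)·w_l = 1. Define A = (w_k/(1+σ²) + (K−1)·δ²·w_l/(δ²+σ²))²·(d + σ²·d) and B = (K−1)·(w_l/(1+σ²) + δ²·(w_k + (K−2)·w_l)/(δ²+σ²))²·(δ²·d + σ²·d). Then A / B = ((1+σ²)/((K−1)·(δ²+σ²))) · ((1 + (σ²/δ²)·((1−δ²)·w_k + δ²)) / (1 + (σ²/δ²)·((1−δ²)·w_l + δ²)))². -/
import Mathlib

/-- Closed-form SNR identity (Theorem 2, eq. 10). -/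
theorem stmt9 (K : ℕ) (hK : 2 ≤ K) (δ σ : ℝ) (hδ : δ ∈ Set.Ioo (0 : ℝ) 1) (hσ : 0 < σ)
    (d : ℕ) (hd : 1 ≤ d) (wk wl : ℝ) (hwk : 0 < wk) (hwl : 0 < wl)
    (hsum : wk + (K - 1 : ℝ) * wl = 1) (A B : ℝ)
    (hA : A = (wk / (1 + σ ^ 2) + (K - 1 : ℝ) * δ ^ 2 * wl / (δ ^ 2 + σ ^ 2)) ^ 2 *
      ((d : ℝ) + σ ^ 2 * d))
    (hB : B = (K - 1 : ℝ) *
      (wl / (1 + σ ^ 2) + δ ^ 2 * (wk + (K - 2 : ℝ) * wl) / (δ ^ 2 + σ ^ 2)) ^ 2 *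
      (δ ^ 2 * d + σ ^ 2 * d)) :
    A / B = (1 + σ ^ 2) / ((K - 1 : ℝ) * (δ ^ 2 + σ ^ 2)) *
      ((1 + σ ^ 2 / δ ^ 2 * ((1 - δ ^ 2) * wk + δ ^ 2)) /
        (1 + σ ^ 2 / δ ^ 2 * ((1 - δ ^ 2) * wl + δ ^ 2))) ^ 2 := by
  obtain ⟨hδ0, hδ1⟩ := hδ
  have hs : (0:ℝ) < σ ^ 2 := by positivity
  have ht : (0:ℝ) < δ ^ 2 := by positivity
  have h1s : (0:ℝ) < 1 + σ ^ 2 := by linarith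
  have hts : (0:ℝ) < δ ^ 2 + σ ^ 2 := by linarith
  have h2K : (2:ℝ) ≤ K := by exact_mod_cast hK
  have hK1 : (0:ℝ) < (K - 1 : ℝ) := by linarith
  have hd' : (0:ℝ) < (d:ℝ) := by exact_mod_cast hd
  have hwl1 : 0 < 1 - wl := by
    nlinarith [mul_nonneg (show (0:ℝ) ≤ (K:ℝ) - 2 by linarith) hwl.le]
  set Nk : ℝ := 1 + σ ^ 2 / δ ^ 2 * ((1 - δ ^ 2) * wk + δ ^ 2) with hNkdef
  set Nl : ℝ := 1 + σ ^ 2 / δ ^ 2 * ((1 - δ ^ 2) * wl + δ ^ 2) with hNldef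
  have hNl : 0 < Nl := by
    have h1 : (0:ℝ) < (1 - δ ^ 2) * wl + δ ^ 2 := by nlinarith
    rw [hNldef]; positivity
  have hwkdef : wk = 1 - (K - 1 : ℝ) * wl := by linarith
  have eA : wk / (1 + σ ^ 2) + (K - 1 : ℝ) * δ ^ 2 * wl / (δ ^ 2 + σ ^ 2)
      = δ ^ 2 * Nk / ((1 + σ ^ 2) * (δ ^ 2 + σ ^ 2)) := by
    rw [hNkdef, hwkdef]
    field_simp
    ring
  have eB : wl / (1 + σ ^ 2) + δ ^ 2 * (wk + (K - 2 : ℝ) * wl) / (δ ^ 2 + σ ^ 2)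
      = δ ^ 2 * Nl / ((1 + σ ^ 2) * (δ ^ 2 + σ ^ 2)) := by
    rw [hNldef, hwkdef]
    field_simp
    ring
  rw [hA, hB, eA, eB]
  have hKne : (K - 1 : ℝ) ≠ 0 := ne_of_gt hK1
  have hNlne : Nl ≠ 0 := ne_of_gt hNl
  field_simp
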